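/- If M' is a memory state in the centralizer C(F₀) of the finite-memory subgroup, then the unique preimage under the encoder of I^{⊗n} ⊗ M' has the form M ⊗ S ⊗ L where S ∈ {I,Z}^{⊗(n-k)} on the ancilla qubits, L is an arbitrary k-qubit Pauli, and M ∈ C(F₀). -/
import Mathlib


open scoped BigOperators

/-- The Pauli group on `j` qubits modulo its center, written additively:
an element `(a, b)` at each qubit corresponds to `X^a Z^b`. -/
abbrev Pauli (j : ℕ) := Fin j → (ZMod 2) × (ZMod 2)

/-- The standard symplectic form: two Pauli elements commute iff it vanishes. -/
def omega {j : ℕ} (v w : Pauli j) : ZMod 2 :=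
  ∑ i, ((v i).1 * (w i).2 + (w i).1 * (v i).2)

/-- A quantum convolutional encoder: a symplectic automorphism taking
(memory `m`, ancilla `s = n - k`, information `k`) to (physical `n`, memory `m`). -/
structure Encoder (m s k n : ℕ) where
  toEquiv : (Pauli m × Pauli s × Pauli k) ≃+ (Pauli n × Pauli m)
  symp : ∀ x y : Pauli m × Pauli s × Pauli k,
    omega (toEquiv x).1 (toEquiv y).1 + omega (toEquiv x).2 (toEquiv y).2
      = omega x.1 y.1 + omega x.2.1 y.2.1 + omega x.2.2 y.2.2

/-- `S ∈ {I, Z}^{⊗ s}`: the X-component vanishes. -/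
def isIZ {s : ℕ} (S : Pauli s) : Prop := ∀ i, (S i).1 = 0

/-- Pauli `Z` on the `i`-th qubit, identity elsewhere. -/
def Zi {s : ℕ} (i : Fin s) : Pauli s := fun j => (0, if j = i then 1 else 0)

/-- Pauli `X` on the `i`-th qubit, identity elsewhere. -/
def Xi {k : ℕ} (i : Fin k) : Pauli k := fun j => (if j = i then 1 else 0, 0)

/-- A standard path: at each step the ancilla input is in `{I,Z}^{⊗s}` and the
logical input is the identity. -/
def stdPath {m s k n : ℕ} (E : Encoder m s k n) (f : ℕ → Pauli m) : Prop :=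
  ∀ t, ∃ (S : Pauli s) (P : Pauli n), isIZ S ∧ E.toEquiv (f t, S, 0) = (P, f (t + 1))

/-- A finite-memory state: some standard path from it reaches the identity memory state. -/
def finiteMemory {m s k n : ℕ} (E : Encoder m s k n) (M : Pauli m) : Prop :=
  ∃ f : ℕ → Pauli m, stdPath E f ∧ f 0 = M ∧ ∃ t, f t = 0

/-- Membership in a zero physical-weight cycle. -/
def inZeroCycle {m s k n : ℕ} (E : Encoder m s k n) (M : Pauli m) : Prop :=
  ∃ (p : ℕ) (f : ℕ → Pauli m), 0 < p ∧ f 0 = M ∧ (∀ t, f (t + p) = f t) ∧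
    ∀ t, ∃ (S : Pauli s) (L : Pauli k), isIZ S ∧ E.toEquiv (f t, S, L) = (0, f (t + 1))

/-- Non-catastrophic: every edge of every zero physical-weight cycle has
identity logical label. -/
def nonCatastrophic {m s k n : ℕ} (E : Encoder m s k n) : Prop :=
  ∀ (p : ℕ) (f : ℕ → Pauli m) (S : ℕ → Pauli s) (L : ℕ → Pauli k),
    0 < p → (∀ t, f (t + p) = f t) →
    (∀ t, isIZ (S t) ∧ E.toEquiv (f t, S t, L t) = (0, f (t + 1))) →
    ∀ t, L t = 0

-- basic lemmas
lemma addself {j : ℕ} (x : Pauli j) : x + x = 0 := by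
  funext i
  have h : ∀ a : ZMod 2, a + a = 0 := by decide
  show (x i + x i) = 0
  ext <;> simp [h]

lemma isIZ_zero {s : ℕ} : isIZ (0 : Pauli s) := fun i => rfl

lemma isIZ_add {s : ℕ} {a b : Pauli s} (ha : isIZ a) (hb : isIZ b) : isIZ (a + b) := by
  intro i
  show (a i).1 + (b i).1 = 0
  rw [ha i, hb i, add_zero]

lemma isIZ_Zi {s : ℕ} (i : Fin s) : isIZ (Zi i) := fun j => rfl

lemma omega_zero_left {j : ℕ} (w : Pauli j) : omega 0 w = 0 := by
  simp [omega]

lemma omega_zero_right {j : ℕ} (v : Pauli j) : omega v 0 = 0 := by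
  simp [omega]

lemma omega_Zi {s : ℕ} (S : Pauli s) (i : Fin s) : omega S (Zi i) = (S i).1 := by
  simp [omega, Zi, mul_ite, Finset.sum_ite_eq', Finset.sum_ite_eq]

section machinery
variable {m s k n : ℕ} (E : Encoder m s k n)

lemma equiv_zero : E.toEquiv 0 = 0 := E.toEquiv.map_zero

/-- Memory transition map with zero inputs. -/
def Tm : Pauli m →+ Pauli m where
  toFun N := (E.toEquiv (N, 0, 0)).2
  map_zero' := by
    show (E.toEquiv ((0 : Pauli m), (0 : Pauli s), (0 : Pauli k))).2 = 0
    have h : ((0 : Pauli m), (0 : Pauli s), (0 : Pauli k)) = 0 := rfl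
    rw [h, equiv_zero]; rfl
  map_add' x y := by
    show (E.toEquiv ((x + y : Pauli m), (0 : Pauli s), (0 : Pauli k))).2
      = (E.toEquiv (x, 0, 0)).2 + (E.toEquiv (y, 0, 0)).2
    have h : ((x + y : Pauli m), (0 : Pauli s), (0 : Pauli k)) = (x, 0, 0) + (y, 0, 0) := by
      simp
    rw [h, E.toEquiv.map_add]; rfl

/-- Memory output produced by ancilla input `S` with zero memory/logical input. -/
def cm (S : Pauli s) : Pauli m := (E.toEquiv (0, S, 0)).2

lemma step_eq (N : Pauli m) (S : Pauli s) :
    (E.toEquiv (N, S, 0)).2 = Tm E N + cm E S := by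
  have h : ((N : Pauli m), S, (0 : Pauli k)) = (N, 0, 0) + (0, S, 0) := by simp
  rw [h, E.toEquiv.map_add]; rfl

/-- The subgroup of memory states of the form `cm S` with `S ∈ {I,Z}^s`. -/
def Csub : AddSubgroup (Pauli m) where
  carrier := {x | ∃ S : Pauli s, isIZ S ∧ cm E S = x}
  zero_mem' := ⟨0, isIZ_zero, by
    show (E.toEquiv (0, 0, 0)).2 = 0
    have h : ((0 : Pauli m), (0 : Pauli s), (0 : Pauli k)) = 0 := rfl
    rw [h, equiv_zero]; rfl⟩
  add_mem' := by
    rintro a b ⟨Sa, hSa, rfl⟩ ⟨Sb, hSb, rfl⟩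
    refine ⟨Sa + Sb, isIZ_add hSa hSb, ?_⟩
    show (E.toEquiv (0, Sa + Sb, 0)).2 = _
    have h : ((0 : Pauli m), Sa + Sb, (0 : Pauli k)) = (0, Sa, 0) + (0, Sb, 0) := by simp
    rw [h, E.toEquiv.map_add]; rfl
  neg_mem' := by
    rintro a ⟨Sa, hSa, rfl⟩
    exact ⟨Sa, hSa, eq_neg_of_add_eq_zero_left (addself _)⟩

/-- Iterates of the transition map. -/
def Tpow : ℕ → (Pauli m →+ Pauli m)
  | 0 => AddMonoidHom.id _
  | (t + 1) => (Tpow t).comp (Tm E)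

lemma Tpow_comm (t : ℕ) : (Tm E).comp (Tpow E t) = (Tpow E t).comp (Tm E) := by
  induction t with
  | zero => rfl
  | succ t ih =>
    show (Tm E).comp ((Tpow E t).comp (Tm E)) = _
    rw [← AddMonoidHom.comp_assoc, ih]
    rfl

/-- Corrections reachable within `t` steps. -/
def Wsub : ℕ → AddSubgroup (Pauli m)
  | 0 => ⊥
  | (t + 1) => Csub E ⊔ (Wsub t).map (Tm E)

lemma Wmono (t : ℕ) : Wsub E t ≤ Wsub E (t + 1) := by
  induction t with
  | zero => exact bot_le
  | succ t ih =>
    show Csub E ⊔ (Wsub E t).map (Tm E) ≤ Csub E ⊔ (Wsub E (t+1)).map (Tm E)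
    exact sup_le_sup_left (AddSubgroup.map_mono ih) _

lemma Walt (t : ℕ) : Wsub E (t + 1) = Wsub E t ⊔ (Csub E).map (Tpow E t) := by
  induction t with
  | zero =>
    show Csub E ⊔ (⊥ : AddSubgroup (Pauli m)).map (Tm E) = ⊥ ⊔ (Csub E).map (AddMonoidHom.id _)
    simp
  | succ t ih =>
    show Csub E ⊔ (Wsub E (t+1)).map (Tm E) = Wsub E (t+1) ⊔ (Csub E).map (Tpow E (t+1))
    conv_lhs => rw [ih]
    rw [AddSubgroup.map_sup, AddSubgroup.map_map, Tpow_comm, ← sup_assoc]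
    have h2 : (Csub E).map ((Tpow E t).comp (Tm E)) = (Csub E).map (Tpow E (t+1)) := rfl
    have h3 : Csub E ⊔ (Wsub E t).map (Tm E) = Wsub E (t+1) := rfl
    rw [h2, h3]
end machinery

section reach
variable {m s k n : ℕ} (E : Encoder m s k n)

/-- `Reach t N`: from memory state `N` one can reach `0` in exactly `t` standard steps
with identity logical inputs. -/
def Reach : ℕ → Pauli m → Prop
  | 0, N => N = 0
  | (t + 1), N => ∃ S : Pauli s, isIZ S ∧ Reach t (E.toEquiv (N, S, 0)).2

lemma finiteMemory_zero : finiteMemory E 0 := by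
  refine ⟨fun _ => 0, fun t => ⟨0, 0, isIZ_zero, ?_⟩, rfl, 0, rfl⟩
  have h : ((0 : Pauli m), (0 : Pauli s), (0 : Pauli k)) = 0 := rfl
  rw [h, equiv_zero]; rfl

lemma finiteMemory_of_reach : ∀ (t : ℕ) (N : Pauli m), Reach E t N → finiteMemory E N := by
  intro t
  induction t with
  | zero => intro N h; rw [show Reach E 0 N = (N = 0) from rfl] at h; subst h
            exact finiteMemory_zero E
  | succ t ih =>
    rintro N ⟨S, hS, hr⟩
    obtain ⟨f, hf, hf0, T, hfT⟩ := ih _ hr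
    refine ⟨fun u => match u with | 0 => N | (u + 1) => f u, ?_, rfl, T + 1, hfT⟩
    intro u
    match u with
    | 0 =>
      refine ⟨S, (E.toEquiv (N, S, 0)).1, hS, ?_⟩
      show E.toEquiv (N, S, 0) = ((E.toEquiv (N, S, 0)).1, f 0)
      rw [hf0]
    | (u + 1) => exact hf u

lemma reach_of_mem : ∀ (t : ℕ) (N : Pauli m), Tpow E t N ∈ Wsub E t → Reach E t N := by
  intro t
  induction t with
  | zero =>
    intro N h
    rw [show Wsub E 0 = ⊥ from rfl, AddSubgroup.mem_bot] at h
    exact h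
  | succ t ih =>
    intro N h
    rw [Walt, AddSubgroup.mem_sup] at h
    obtain ⟨w, hw, z, hz, hwz⟩ := h
    rw [AddSubgroup.mem_map] at hz
    obtain ⟨c, hc, rfl⟩ := hz
    obtain ⟨S0, hS0, rfl⟩ := hc
    refine ⟨S0, hS0, ih _ ?_⟩
    have h1 : Tpow E t ((E.toEquiv (N, S0, 0)).2)
        = Tpow E (t + 1) N + Tpow E t (cm E S0) := by
      rw [step_eq, map_add]; rfl
    rw [h1, ← hwz, add_assoc, addself, add_zero]
    exact hw

lemma exists_stable : ∃ t : ℕ, Wsub E (t + 1) = Wsub E t := by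
  by_contra hcon
  push_neg at hcon
  have hm : StrictMono (Wsub E) :=
    strictMono_nat_of_lt_succ fun t => lt_of_le_of_ne (Wmono E t) (Ne.symm (hcon t))
  have : Finite (AddSubgroup (Pauli m)) :=
    Finite.of_injective (fun H : AddSubgroup (Pauli m) => (H : Set (Pauli m)))
      SetLike.coe_injective
  obtain ⟨a, b, hab, h2⟩ := Finite.exists_ne_map_eq_of_infinite (Wsub E)
  exact hab (hm.injective h2)

lemma finiteMemory_cm (S : Pauli s) (hS : isIZ S) : finiteMemory E (cm E S) := by
  obtain ⟨t, ht⟩ := exists_stable E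
  have hC : Csub E ≤ Wsub E t := by
    have : Csub E ≤ Wsub E (t + 1) := le_sup_left
    rwa [ht] at this
  have hT : ∀ x ∈ Wsub E t, Tm E x ∈ Wsub E t := by
    intro x hx
    have h1 : (Wsub E t).map (Tm E) ≤ Wsub E (t + 1) := le_sup_right
    have h2 : Tm E x ∈ (Wsub E t).map (Tm E) := AddSubgroup.mem_map_of_mem _ hx
    rw [ht] at h1
    exact h1 h2
  have hiter : ∀ (j : ℕ) (x : Pauli m), x ∈ Wsub E t → Tpow E j x ∈ Wsub E t := by
    intro j
    induction j with
    | zero => intro x hx; exact hx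
    | succ j ih => intro x hx; exact ih _ (hT x hx)
  exact finiteMemory_of_reach E t _ (reach_of_mem E t _ (hiter t _ (hC ⟨S, hS, rfl⟩)))

end reach

section main
variable {m s k n : ℕ} (E : Encoder m s k n)

lemma key_identity (M' : Pauli m) (M : Pauli m) (S : Pauli s) (L : Pauli k)
    (hE : E.toEquiv (M, S, L) = (0, M')) (N : Pauli m) (S0 : Pauli s) :
    omega M' (E.toEquiv (N, S0, 0)).2 = omega M N + omega S S0 := by
  have key := E.symp (M, S, L) (N, S0, 0)
  rw [hE] at key
  simpa [omega_zero_left, omega_zero_right] using key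

theorem preimage_of_centralizer_state' (M' : Pauli m)
    (hM' : ∀ N : Pauli m, finiteMemory E N → omega M' N = 0)
    (M : Pauli m) (S : Pauli s) (L : Pauli k)
    (hE : E.toEquiv (M, S, L) = (0, M')) :
    isIZ S ∧ ∀ N : Pauli m, finiteMemory E N → omega M N = 0 := by
  have hIZ : isIZ S := by
    intro i
    have key := key_identity E M' M S L hE 0 (Zi i)
    have hfm : omega M' (E.toEquiv (0, Zi i, 0)).2 = 0 :=
      hM' _ (finiteMemory_cm E (Zi i) (isIZ_Zi i))
    rw [hfm, omega_zero_right, zero_add, omega_Zi] at key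
    exact key.symm
  refine ⟨hIZ, ?_⟩
  intro N hN
  obtain ⟨f, hf, hf0, T, hfT⟩ := hN
  match T, hfT with
  | 0, hfT =>
    rw [hf0] at hfT
    rw [hfT, omega_zero_right]
  | (T + 1), hfT =>
    obtain ⟨S0, P0, hS0, hstep⟩ := hf 0
    have hf1 : finiteMemory E (f 1) :=
      ⟨fun u => f (u + 1), fun u => hf (u + 1), rfl, T, hfT⟩
    have key := key_identity E M' M S L hE N S0
    rw [hf0] at hstep
    rw [hstep] at key
    have hSS : omega S S0 = 0 := by
      apply Finset.sum_eq_zero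
      intro j _
      rw [hIZ j, hS0 j, zero_mul, zero_mul, add_zero]
    rw [hSS, add_zero, hM' (f 1) hf1] at key
    exact key.symm
end main

theorem preimage_of_centralizer_state {m s k n : ℕ} (E : Encoder m s k n)
    (M' : Pauli m) (hM' : ∀ N : Pauli m, finiteMemory E N → omega M' N = 0)
    (M : Pauli m) (S : Pauli s) (L : Pauli k)
    (hE : E.toEquiv (M, S, L) = (0, M')) :
    isIZ S ∧ ∀ N : Pauli m, finiteMemory E N → omega M N = 0 :=
  preimage_of_centralizer_state' E M' hM' M S L hE
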